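/- arXiv:1101.5539 — 4 statements merged into one kernel-verified Lean document; each statement's English description precedes it below -/
import Mathlib

section
/- Let θ > 0, μ ∈ ℝ, σ > 0, and let A, B, z, k₁ > 0, k₂, k₃, τ₀, τ₁, τ₂ be constants. Consider the space-time transformation y' = ψ(y, τ) = (√k₁/σ) e^{(τ−τ₀)/θ}(y − z) + (θ√k₁(z/θ − μ)/σ)[e^{(τ−τ₀)/θ} − e^{(τ₂−τ₀)/θ}] + k₂ and τ' = φ(τ) = (k₁θ/2)[e^{2(τ−τ₀)/θ} − e^{2(τ₁−τ₀)/θ}] + k₃. Then the image under (ψ, φ) of the hyperbolic boundary S(τ) = μθ + A e^{−τ/θ} + B e^{τ/θ} in the (y, τ)-plane is a boundary of the form S'(τ') = a + b τ' (affine in τ') in the (y', τ')-plane, for suitable constants a, b depending on A, B, θ, μ, σ, z, and the kᵢ, τᵢ. -/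
open Real

/-- The space-time transformation mapping the Ornstein–Uhlenbeck process into a
Wiener process sends the hyperbolic boundary `S(τ) = μθ + Ae^{-τ/θ} + Be^{τ/θ}`
into a boundary affine in the new time variable: `ψ(S(τ), τ) = a + b·φ(τ)`. -/
theorem ou_hyperbolic_to_linear_boundary
    (θ μ σ A B z k₁ k₂ k₃ τ₀ τ₁ τ₂ : ℝ) (hθ : 0 < θ) (hσ : 0 < σ)
    (hA : 0 < A) (hB : 0 < B) (hz : 0 < z) (hk₁ : 0 < k₁)
    (ψ : ℝ → ℝ → ℝ) (φ : ℝ → ℝ) (S : ℝ → ℝ)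
    (hψ : ∀ y τ, ψ y τ =
      Real.sqrt k₁ / σ * Real.exp ((τ - τ₀) / θ) * (y - z) +
        θ * Real.sqrt k₁ * (z / θ - μ) / σ *
          (Real.exp ((τ - τ₀) / θ) - Real.exp ((τ₂ - τ₀) / θ)) + k₂)
    (hφ : ∀ τ, φ τ =
      k₁ * θ / 2 *
        (Real.exp (2 * (τ - τ₀) / θ) - Real.exp (2 * (τ₁ - τ₀) / θ)) + k₃)
    (hS : ∀ τ, S τ = μ * θ + A * Real.exp (-τ / θ) + B * Real.exp (τ / θ)) :
    ∃ a b : ℝ, ∀ τ, ψ (S τ) τ = a + b * φ τ := by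
  refine ⟨Real.sqrt k₁ / σ * A / Real.exp (τ₀ / θ)
      - θ * (Real.sqrt k₁ / σ) * (z / θ - μ) * Real.exp ((τ₂ - τ₀) / θ) + k₂
      + 2 * (Real.sqrt k₁ / σ) * B * Real.exp (τ₀ / θ) / (k₁ * θ) *
          (k₁ * θ / 2 * Real.exp (2 * (τ₁ - τ₀) / θ) - k₃),
    2 * (Real.sqrt k₁ / σ) * B * Real.exp (τ₀ / θ) / (k₁ * θ), fun τ => ?_⟩
  rw [hψ, hφ, hS]
  have hθ' : θ ≠ 0 := hθ.ne'
  have h1 : Real.exp ((τ - τ₀) / θ) = Real.exp (τ / θ) / Real.exp (τ₀ / θ) := by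
    rw [← Real.exp_sub]; ring_nf
  have h2 : Real.exp (2 * (τ - τ₀) / θ)
      = Real.exp (τ / θ) * Real.exp (τ / θ) / (Real.exp (τ₀ / θ) * Real.exp (τ₀ / θ)) := by
    rw [← Real.exp_add, ← Real.exp_add, ← Real.exp_sub]; ring_nf
  have h3 : Real.exp (-τ / θ) = (Real.exp (τ / θ))⁻¹ := by
    rw [← Real.exp_neg]; ring_nf
  rw [h1, h2, h3]
  have hσ' : σ ≠ 0 := hσ.ne'
  have he0' : Real.exp (τ₀ / θ) ≠ 0 := Real.exp_ne_zero _
  have he1 : Real.exp (τ / θ) ≠ 0 := Real.exp_ne_zero _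
  field_simp
  ring
end

section
/- Let θ > 0, S > 0, and suppose μθ > S and (σ²θ)/2 < (μθ − S)². Given m₁ = μθ/(μθ − S) and m₂ = (2(μθ)² − σ²θ)/(2(μθ − S)² − σ²θ), the pair (μ, σ²) is uniquely recovered by μ = (S/θ)·m₁/(m₁ − 1) and σ² = (2S²/θ)·(m₂ − m₁²)/((m₂ − 1)(m₁ − 1)²). Moreover m₁ > 1 and m₂ > m₁² under the stated assumptions. -/
open Real

/-- Moment-method inversion for the Ornstein–Uhlenbeck exponential moments:
given `m₁ = μθ/(μθ - S)` and `m₂ = (2(μθ)² - σ²θ)/(2(μθ - S)² - σ²θ)` in the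
suprathreshold regime `μθ > S > 0` with `(σ²θ)/2 < (μθ - S)²`, one recovers
`μ = (S/θ)·m₁/(m₁ - 1)` and `σ² = (2S²/θ)·(m₂ - m₁²)/((m₂ - 1)(m₁ - 1)²)`,
and moreover `m₁ > 1` and `m₂ > m₁²`. -/
theorem ou_exponential_moment_inversion (θ S μ σ : ℝ) (hθ : 0 < θ)
    (hS : 0 < S) (hσ : 0 < σ)
    (hsup : S < μ * θ) (hnoise : σ ^ 2 * θ / 2 < (μ * θ - S) ^ 2)
    (m₁ m₂ : ℝ)
    (hm₁ : m₁ = μ * θ / (μ * θ - S))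
    (hm₂ : m₂ = (2 * (μ * θ) ^ 2 - σ ^ 2 * θ) / (2 * (μ * θ - S) ^ 2 - σ ^ 2 * θ)) :
    μ = S / θ * (m₁ / (m₁ - 1)) ∧
    σ ^ 2 = 2 * S ^ 2 / θ * ((m₂ - m₁ ^ 2) / ((m₂ - 1) * (m₁ - 1) ^ 2)) ∧
    1 < m₁ ∧ m₁ ^ 2 < m₂ := by
  have hA : 0 < μ * θ - S := by linarith
  have hA' : μ * θ - S ≠ 0 := ne_of_gt hA
  have hD : 0 < 2 * (μ * θ - S) ^ 2 - σ ^ 2 * θ := by linarith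
  have hD' : (2 * (μ * θ - S) ^ 2 - σ ^ 2 * θ) ≠ 0 := ne_of_gt hD
  have hc : 0 < σ ^ 2 * θ := by positivity
  have h1 : m₁ - 1 = S / (μ * θ - S) := by
    rw [hm₁]; field_simp; ring
  have h1' : m₁ - 1 = S / (μ * θ - S) := h1
  have hgt1 : 1 < m₁ := by
    have : 0 < m₁ - 1 := by rw [h1]; positivity
    linarith
  have h2 : m₂ - 1 = (2 * S * (2 * (μ * θ - S) + S)) / (2 * (μ * θ - S) ^ 2 - σ ^ 2 * θ) := by
    rw [hm₂, eq_div_iff hD', sub_mul, div_mul_cancel₀ _ hD']; ring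
  have h3 : m₂ - m₁ ^ 2 =
      (σ ^ 2 * θ * S * (2 * (μ * θ - S) + S)) /
        ((μ * θ - S) ^ 2 * (2 * (μ * θ - S) ^ 2 - σ ^ 2 * θ)) := by
    rw [hm₂, hm₁, div_pow, div_sub_div _ _ hD' (pow_ne_zero 2 hA'), div_eq_div_iff (mul_ne_zero hD' (pow_ne_zero 2 hA')) (mul_ne_zero (pow_ne_zero 2 hA') hD')]; ring
  have hsq : m₁ ^ 2 < m₂ := by
    have : 0 < m₂ - m₁ ^ 2 := by rw [h3]; positivity
    linarith
  refine ⟨?_, ?_, hgt1, hsq⟩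
  · rw [h1, hm₁]; field_simp
  · have hE : 2 * (μ * θ - S) + S ≠ 0 := by positivity
    have key : σ ^ 2 * θ * S * (2 * (μ * θ - S) + S) / ((μ * θ - S) ^ 2 * (2 * (μ * θ - S) ^ 2 - σ ^ 2 * θ)) /
        (2 * S * (2 * (μ * θ - S) + S) / (2 * (μ * θ - S) ^ 2 - σ ^ 2 * θ) * (S / (μ * θ - S)) ^ 2) =
        σ ^ 2 * θ / (2 * S ^ 2) := by
      rw [div_pow, div_mul_div_comm, div_div_div_eq,
        div_eq_div_iff (by simp [hD', hA', hS.ne', hE]) (by positivity)]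
      ring
    rw [h3, h2, h1]
    rw [key, div_mul_div_comm, eq_div_iff (by positivity)]
    ring
end

section
/- Let g: (0,∞) → [0,∞) be a probability density with cumulative distribution G, let φ be a probability density on (0,∞) (the refractory period density), and define q₀(t) = 1 − G(t) and, for k ≥ 1, q_k(t) = (g * φ)^{*k} * (1 − G)(t) + g * (φ * g)^{*(k−1)} * (1 − Φ)(t), where Φ is the cdf of φ and * denotes convolution on (0,∞). Then for every t > 0, Σ_{k=0}^∞ q_k(t) = 1. -/
open Real MeasureTheory intervalIntegral

/-- Convolution of two functions on `(0, ∞)`. -/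
noncomputable def posConv (f g : ℝ → ℝ) : ℝ → ℝ :=
  fun t => ∫ s in (0:ℝ)..t, f s * g (t - s)

/-- `iterConv f h k = f^{*k} * h`: the `k`-fold convolution power of `f`
applied (by convolution) to `h`, with the `0`-fold convolution acting as the
identity. -/
noncomputable def iterConv (f h : ℝ → ℝ) : ℕ → ℝ → ℝ
  | 0 => h
  | k + 1 => posConv f (iterConv f h k)

namespace RPCS
open Set Filter

structure Ker (f : ℝ → ℝ) : Prop where
  meas : Measurable f
  nonneg : ∀ s, 0 ≤ f s
  int : IntegrableOn f (Ioi 0)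
  mass : ∫ s in Ioi (0:ℝ), f s ≤ 1

structure Good (C : ℝ) (h : ℝ → ℝ) : Prop where
  meas : Measurable h
  nonneg : ∀ u, 0 ≤ u → 0 ≤ h u
  le : ∀ u, 0 ≤ u → h u ≤ C

/-- Alternating convolution tower: `tw f₁ f₂ h k = (f₁ * f₂)^{*k} * h`
written with single-kernel convolutions only. -/
noncomputable def tw (f₁ f₂ h : ℝ → ℝ) : ℕ → ℝ → ℝ
  | 0 => h
  | k + 1 => posConv f₁ (posConv f₂ (tw f₁ f₂ h k))


lemma measurable_posConv {f h : ℝ → ℝ} (hf : Measurable f) (hh : Measurable h) :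
    Measurable (posConv f h) := by
  have key : ∀ T : Set (ℝ × ℝ), MeasurableSet T →
      Measurable (fun t : ℝ => ∫ s : ℝ, T.indicator (fun p : ℝ × ℝ => f p.2 * h (p.1 - p.2)) (t, s)) := by
    intro T hT
    have : StronglyMeasurable (fun p : ℝ × ℝ =>
        T.indicator (fun p : ℝ × ℝ => f p.2 * h (p.1 - p.2)) p) := by
      apply Measurable.stronglyMeasurable
      exact Measurable.indicator
        ((hf.comp measurable_snd).mul (hh.comp (measurable_fst.sub measurable_snd))) hT
    exact this.integral_prod_right'.measurable
  have h1 : MeasurableSet {p : ℝ × ℝ | p.2 ∈ Ioc (0:ℝ) p.1} := by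
    apply MeasurableSet.inter
    · exact measurableSet_lt measurable_const measurable_snd
    · exact measurableSet_le measurable_snd measurable_fst
  have h2 : MeasurableSet {p : ℝ × ℝ | p.2 ∈ Ioc p.1 (0:ℝ)} := by
    apply MeasurableSet.inter
    · exact measurableSet_lt measurable_fst measurable_snd
    · exact measurableSet_le measurable_snd measurable_const
  have heq : posConv f h = fun t =>
      (∫ s : ℝ, {p : ℝ × ℝ | p.2 ∈ Ioc (0:ℝ) p.1}.indicator
          (fun p : ℝ × ℝ => f p.2 * h (p.1 - p.2)) (t, s)) -
      (∫ s : ℝ, {p : ℝ × ℝ | p.2 ∈ Ioc p.1 (0:ℝ)}.indicator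
          (fun p : ℝ × ℝ => f p.2 * h (p.1 - p.2)) (t, s)) := by
    funext t
    have e1 : ∀ s : ℝ, {p : ℝ × ℝ | p.2 ∈ Ioc (0:ℝ) p.1}.indicator
        (fun p : ℝ × ℝ => f p.2 * h (p.1 - p.2)) (t, s)
        = (Ioc (0:ℝ) t).indicator (fun s => f s * h (t - s)) s := by
      intro s
      by_cases hs : s ∈ Ioc (0:ℝ) t
      · rw [Set.indicator_of_mem hs, Set.indicator_of_mem (by exact hs)]
      · rw [Set.indicator_of_notMem hs, Set.indicator_of_notMem (by exact hs)]
    have e2 : ∀ s : ℝ, {p : ℝ × ℝ | p.2 ∈ Ioc p.1 (0:ℝ)}.indicator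
        (fun p : ℝ × ℝ => f p.2 * h (p.1 - p.2)) (t, s)
        = (Ioc t (0:ℝ)).indicator (fun s => f s * h (t - s)) s := by
      intro s
      by_cases hs : s ∈ Ioc t (0:ℝ)
      · rw [Set.indicator_of_mem hs, Set.indicator_of_mem (by exact hs)]
      · rw [Set.indicator_of_notMem hs, Set.indicator_of_notMem (by exact hs)]
    simp only [e1, e2]
    rw [MeasureTheory.integral_indicator measurableSet_Ioc,
      MeasureTheory.integral_indicator measurableSet_Ioc]
    rfl
  rw [heq]
  exact (key _ h1).sub (key _ h2)

lemma posConv_nonneg {f h : ℝ → ℝ} (hf0 : ∀ s, 0 ≤ s → 0 ≤ f s)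
    (hh0 : ∀ u, 0 ≤ u → 0 ≤ h u) {u : ℝ} (hu : 0 ≤ u) : 0 ≤ posConv f h u := by
  apply intervalIntegral.integral_nonneg hu
  intro s hs
  exact mul_nonneg (hf0 s hs.1) (hh0 _ (by linarith [hs.2]))

lemma integrableOn_conv_integrand {f h : ℝ → ℝ} (hf : Measurable f)
    (hfi : IntegrableOn f (Ioi 0)) (hh : Measurable h) {C : ℝ}
    (hhb : ∀ v, 0 ≤ v → |h v| ≤ C) {u : ℝ} (hu : 0 ≤ u) :
    IntegrableOn (fun s => f s * h (u - s)) (Ioc 0 u) := by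
  have hint : IntegrableOn (fun s => |f s| * C) (Ioc 0 u) :=
    (hfi.mono_set Ioc_subset_Ioi_self).abs.mul_const C
  refine Integrable.mono' hint ?_ ?_
  · exact ((hf.mul (hh.comp (measurable_const.sub measurable_id))).aestronglyMeasurable)
  · filter_upwards [ae_restrict_mem measurableSet_Ioc] with s hs
    rw [Real.norm_eq_abs, abs_mul]
    exact mul_le_mul_of_nonneg_left (hhb _ (by linarith [hs.2])) (abs_nonneg _)

lemma intervalIntegrable_conv_integrand {f h : ℝ → ℝ} (hf : Measurable f)
    (hfi : IntegrableOn f (Ioi 0)) (hh : Measurable h) {C : ℝ}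
    (hhb : ∀ v, 0 ≤ v → |h v| ≤ C) {u : ℝ} (hu : 0 ≤ u) :
    IntervalIntegrable (fun s => f s * h (u - s)) volume 0 u := by
  rw [intervalIntegrable_iff, uIoc_of_le hu]
  exact integrableOn_conv_integrand hf hfi hh hhb hu

lemma posConv_congr {f h₁ h₂ : ℝ → ℝ} (heq : ∀ v, 0 ≤ v → h₁ v = h₂ v) {u : ℝ} (hu : 0 ≤ u) :
    posConv f h₁ u = posConv f h₂ u := by
  apply intervalIntegral.integral_congr
  intro s hs
  rw [uIcc_of_le hu] at hs
  show f s * h₁ (u - s) = f s * h₂ (u - s)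
  rw [heq (u - s) (by linarith [hs.1, hs.2])]

/-- `posConv` with a `Ker` kernel preserves `Good`ness. -/
lemma posConv_good {f h : ℝ → ℝ} (kf : Ker f) {C : ℝ} (hC : 0 ≤ C) (hh : Good C h) :
    Good C (posConv f h) := by
  refine ⟨measurable_posConv kf.meas hh.meas,
    fun u hu => posConv_nonneg (fun s _ => kf.nonneg s) hh.nonneg hu, fun u hu => ?_⟩
  have h1 : posConv f h u ≤ ∫ s in (0:ℝ)..u, f s * C := by
    apply intervalIntegral.integral_mono_on hu
      (intervalIntegrable_conv_integrand kf.meas kf.int hh.meas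
        (fun v hv => by rw [abs_of_nonneg (hh.nonneg v hv)]; exact hh.le v hv) hu)
      (by rw [intervalIntegrable_iff, uIoc_of_le hu]
          exact (kf.int.mono_set Ioc_subset_Ioi_self).mul_const C)
    · intro s hs
      exact mul_le_mul_of_nonneg_left (hh.le _ (by linarith [hs.2])) (kf.nonneg s)
  have h2 : (∫ s in (0:ℝ)..u, f s * C) = (∫ s in Ioc (0:ℝ) u, f s) * C := by
    rw [intervalIntegral.integral_of_le hu, ← MeasureTheory.integral_mul_const]
  have h3 : (∫ s in Ioc (0:ℝ) u, f s) ≤ 1 := by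
    refine le_trans ?_ kf.mass
    apply setIntegral_mono_set kf.int
    · exact ae_of_all _ (fun s => kf.nonneg s)
    · exact ae_of_all _ Ioc_subset_Ioi_self
  calc posConv f h u ≤ (∫ s in Ioc (0:ℝ) u, f s) * C := by rw [← h2]; exact h1
    _ ≤ 1 * C := mul_le_mul_of_nonneg_right h3 hC
    _ = C := one_mul C


/-- Laplace transform at 1 of `f` on `(0,∞)`. -/
noncomputable def lapl (f : ℝ → ℝ) : ℝ := ∫ s in Ioi (0:ℝ), exp (-s) * f s

lemma lapl_integrand_int {f : ℝ → ℝ} (kf : Ker f) :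
    IntegrableOn (fun s => exp (-s) * f s) (Ioi 0) := by
  refine Integrable.mono' kf.int
    ((Real.measurable_exp.comp measurable_neg).mul kf.meas).aestronglyMeasurable ?_
  filter_upwards [ae_restrict_mem measurableSet_Ioi] with s hs
  rw [Real.norm_eq_abs, abs_mul, abs_of_pos (exp_pos _), abs_of_nonneg (kf.nonneg s)]
  nth_rewrite 2 [← one_mul (f s)]
  exact mul_le_mul_of_nonneg_right (exp_le_one_iff.2 (by linarith [mem_Ioi.1 hs])) (kf.nonneg s)

lemma lapl_nonneg {f : ℝ → ℝ} (kf : Ker f) : 0 ≤ lapl f :=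
  setIntegral_nonneg measurableSet_Ioi fun s _ => mul_nonneg (exp_pos _).le (kf.nonneg s)

lemma lapl_le_one {f : ℝ → ℝ} (kf : Ker f) : lapl f ≤ 1 := by
  refine le_trans ?_ kf.mass
  apply setIntegral_mono_on (lapl_integrand_int kf) kf.int measurableSet_Ioi
  intro s hs
  nth_rewrite 2 [← one_mul (f s)]
  exact mul_le_mul_of_nonneg_right (exp_le_one_iff.2 (by linarith [mem_Ioi.1 hs])) (kf.nonneg s)

lemma lapl_lt_one {f : ℝ → ℝ} (kf : Ker f) (hmass : ∫ s in Ioi (0:ℝ), f s = 1) :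
    lapl f < 1 := by
  have hgi : IntegrableOn (fun s => (1 - exp (-s)) * f s) (Ioi 0) := by
    have : (fun s => (1 - exp (-s)) * f s) = fun s => f s - exp (-s) * f s := by
      funext s; ring
    rw [this]
    exact kf.int.sub (lapl_integrand_int kf)
  have key : 0 < ∫ s in Ioi (0:ℝ), (1 - exp (-s)) * f s := by
    rw [setIntegral_pos_iff_support_of_nonneg_ae ?pos hgi]
    case pos =>
      filter_upwards [ae_restrict_mem measurableSet_Ioi] with s hs
      have : exp (-s) ≤ 1 := exp_le_one_iff.2 (by linarith [mem_Ioi.1 hs])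
      exact mul_nonneg (by linarith) (kf.nonneg s)
    -- 0 < volume (support ∩ Ioi 0)
    by_contra hle
    push_neg at hle
    have hnull : volume (Function.support (fun s => (1 - exp (-s)) * f s) ∩ Ioi 0) = 0 :=
      le_antisymm hle zero_le
    have hsub : Function.support f ∩ Ioi 0 ⊆
        Function.support (fun s => (1 - exp (-s)) * f s) ∩ Ioi 0 := by
      rintro s ⟨hfs, hs⟩
      refine ⟨?_, hs⟩
      have h1 : (0:ℝ) < 1 - exp (-s) := by
        have := exp_lt_one_iff.2 (neg_lt_zero.2 (mem_Ioi.1 hs))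
        linarith
      exact mul_ne_zero (ne_of_gt h1) hfs
    have hnull2 : volume (Function.support f ∩ Ioi 0) = 0 :=
      measure_mono_null hsub hnull
    have hzero : ∫ s in Ioi (0:ℝ), f s = 0 := by
      have hae : f =ᵐ[volume.restrict (Ioi 0)] 0 := by
        rw [Filter.EventuallyEq, ae_restrict_iff' measurableSet_Ioi]
        rw [ae_iff]
        apply measure_mono_null ?_ hnull2
        intro s hs
        simp only [Set.mem_setOf_eq, not_forall] at hs
        obtain ⟨hs1, hs2⟩ := hs
        exact ⟨hs2, hs1⟩
      rw [integral_congr_ae hae]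
      simp
    rw [hzero] at hmass
    norm_num at hmass
  have hsplit : ∫ s in Ioi (0:ℝ), (1 - exp (-s)) * f s
      = (∫ s in Ioi (0:ℝ), f s) - lapl f := by
    rw [show (fun s => (1 - exp (-s)) * f s) = fun s => f s - exp (-s) * f s from
      funext fun s => by ring]
    exact integral_sub kf.int (lapl_integrand_int kf)
  rw [hsplit, hmass] at key
  linarith


lemma posConv_assoc {a b c : ℝ → ℝ} (ham : Measurable a) (hbm : Measurable b)
    (ha0 : ∀ s, 0 ≤ a s) (hb0 : ∀ s, 0 ≤ b s)
    (hai : IntegrableOn a (Ioi 0)) (hbi : IntegrableOn b (Ioi 0))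
    (hcm : Measurable c) {M : ℝ} (hc0 : ∀ v, 0 ≤ v → 0 ≤ c v)
    (hcM : ∀ v, 0 ≤ v → c v ≤ M) {u : ℝ} (hu : 0 ≤ u) :
    posConv a (posConv b c) u = posConv (posConv a b) c u := by
  classical
  set F : ℝ × ℝ → ℝ := fun p =>
    if 0 < p.1 ∧ 0 < p.2 ∧ p.1 + p.2 ≤ u then a p.1 * (b p.2 * c (u - p.1 - p.2)) else 0 with hF
  have hM0 : 0 ≤ M := le_trans (hc0 0 le_rfl) (hcM 0 le_rfl)
  have hsetm : MeasurableSet {p : ℝ × ℝ | 0 < p.1 ∧ 0 < p.2 ∧ p.1 + p.2 ≤ u} := by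
    refine MeasurableSet.inter (measurableSet_lt measurable_const measurable_fst)
      (MeasurableSet.inter (measurableSet_lt measurable_const measurable_snd) ?_)
    exact measurableSet_le (measurable_fst.add measurable_snd) measurable_const
  have hFm : Measurable F := by
    refine Measurable.ite hsetm ?_ measurable_const
    exact (ham.comp measurable_fst).mul ((hbm.comp measurable_snd).mul
      (hcm.comp ((measurable_const.sub measurable_fst).sub measurable_snd)))
  -- dominating function
  have hdom : Integrable (fun p : ℝ × ℝ =>
      ((Ioi (0:ℝ)).indicator a p.1 * (Ioi (0:ℝ)).indicator b p.2) * M)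
      (volume.prod volume) := by
    refine Integrable.mul_const ?_ M
    exact Integrable.mul_prod ((integrable_indicator_iff measurableSet_Ioi).2 hai)
      ((integrable_indicator_iff measurableSet_Ioi).2 hbi)
  have hFint : Integrable F (volume.prod volume) := by
    refine Integrable.mono' hdom hFm.aestronglyMeasurable (ae_of_all _ ?_)
    rintro ⟨s, r⟩
    rw [Real.norm_eq_abs]
    by_cases hp : 0 < s ∧ 0 < r ∧ s + r ≤ u
    · obtain ⟨hs, hr, hsr⟩ := hp
      have husr : 0 ≤ u - s - r := by linarith
      rw [hF]
      simp only [hs, hr, hsr, and_self, if_true]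
      rw [Set.indicator_of_mem (mem_Ioi.2 hs), Set.indicator_of_mem (mem_Ioi.2 hr)]
      rw [abs_of_nonneg (mul_nonneg (ha0 s) (mul_nonneg (hb0 r) (hc0 _ husr)))]
      rw [mul_assoc]
      exact mul_le_mul_of_nonneg_left
        (mul_le_mul_of_nonneg_left (hcM _ husr) (hb0 r)) (ha0 s)
    · rw [hF]; simp only [hp, if_false, abs_zero]
      have h1 : (0:ℝ) ≤ (Ioi (0:ℝ)).indicator a s :=
        Set.indicator_nonneg (fun x _ => ha0 x) s
      have h2 : (0:ℝ) ≤ (Ioi (0:ℝ)).indicator b r :=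
        Set.indicator_nonneg (fun x _ => hb0 x) r
      exact mul_nonneg (mul_nonneg h1 h2) hM0
  -- LHS = ∫ F
  have hLHS : posConv a (posConv b c) u = ∫ p : ℝ × ℝ, F p ∂(volume.prod volume) := by
    have step1 : ∀ s ∈ Ioc (0:ℝ) u, a s * posConv b c (u - s) = ∫ r : ℝ, F (s, r) := by
      intro s hs
      have hus : 0 ≤ u - s := by linarith [hs.2]
      have : (fun r => F (s, r)) =
          (Ioc (0:ℝ) (u - s)).indicator (fun r => a s * (b r * c (u - s - r))) := by
        funext r
        by_cases hr : r ∈ Ioc (0:ℝ) (u - s)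
        · rw [Set.indicator_of_mem hr, hF]
          have : 0 < s ∧ 0 < r ∧ s + r ≤ u := ⟨hs.1, hr.1, by linarith [hr.2]⟩
          simp only [this, and_self, if_true]
        · rw [Set.indicator_of_notMem hr, hF]
          have hn : ¬(0 < s ∧ 0 < r ∧ s + r ≤ u) := by
            rintro ⟨h1, h2, h3⟩
            exact hr ⟨h2, by linarith⟩
          simp only [hn, if_false]
      rw [this, MeasureTheory.integral_indicator measurableSet_Ioc,
        MeasureTheory.integral_const_mul]
      unfold posConv
      rw [intervalIntegral.integral_of_le hus]
    calc posConv a (posConv b c) u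
        = ∫ s in Ioc (0:ℝ) u, a s * posConv b c (u - s) :=
          intervalIntegral.integral_of_le hu
      _ = ∫ s in Ioc (0:ℝ) u, ∫ r : ℝ, F (s, r) :=
          setIntegral_congr_fun measurableSet_Ioc step1
      _ = ∫ s : ℝ, ∫ r : ℝ, F (s, r) := by
          apply setIntegral_eq_integral_of_forall_compl_eq_zero
          intro s hs
          have : ∀ r : ℝ, F (s, r) = 0 := by
            intro r
            rw [hF]
            have : ¬(0 < s ∧ 0 < r ∧ s + r ≤ u) := by
              rintro ⟨h1, h2, h3⟩
              exact hs ⟨h1, by linarith⟩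
            simp only [this, if_false]
          simp only [this, MeasureTheory.integral_zero]
      _ = ∫ p : ℝ × ℝ, F p ∂(volume.prod volume) := by
          rw [MeasureTheory.integral_integral (by exact hFint)]
  -- change of variables
  set T : ℝ × ℝ → ℝ × ℝ := fun p => (p.2, p.1 - p.2) with hT
  have hTmp : MeasurePreserving T (volume.prod volume) (volume.prod volume) := by
    have h1 : MeasurePreserving (fun z : ℝ × ℝ => (z.1, z.2 - z.1))
        (volume.prod volume) (volume.prod volume) := measurePreserving_prod_sub volume volume
    have h2 : MeasurePreserving (Prod.swap : ℝ × ℝ → ℝ × ℝ)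
        (volume.prod volume) (volume.prod volume) := MeasureTheory.Measure.measurePreserving_swap
    exact h1.comp h2
  have hTemb : MeasurableEmbedding T := by
    have : T = ⇑((MeasurableEquiv.prodComm (α := ℝ) (β := ℝ)).trans
        (MeasurableEquiv.shearSubRight ℝ)) := rfl
    rw [this]
    exact MeasurableEquiv.measurableEmbedding _
  have hcomp : ∫ p : ℝ × ℝ, F (T p) ∂(volume.prod volume)
      = ∫ p : ℝ × ℝ, F p ∂(volume.prod volume) := hTmp.integral_comp hTemb F
  -- RHS = ∫ F ∘ T
  have hRHS : posConv (posConv a b) c u = ∫ p : ℝ × ℝ, F (T p) ∂(volume.prod volume) := by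
    have hFTint : Integrable (F ∘ T) (volume.prod volume) :=
      (hTmp.integrable_comp_emb hTemb).2 hFint
    have step1 : ∀ τ ∈ Ioc (0:ℝ) u, posConv a b τ * c (u - τ) = ∫ s : ℝ, F (T (τ, s)) := by
      intro τ hτ
      have hτ0 : 0 ≤ τ := hτ.1.le
      have : (fun s => F (T (τ, s))) =
          (Ioo (0:ℝ) τ).indicator (fun s => (a s * b (τ - s)) * c (u - τ)) := by
        funext s
        rw [hT, hF]
        simp only
        by_cases hs : s ∈ Ioo (0:ℝ) τ
        · rw [Set.indicator_of_mem hs]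
          have : 0 < s ∧ 0 < τ - s ∧ s + (τ - s) ≤ u := ⟨hs.1, by linarith [hs.2], by
            simp only [add_sub_cancel]; exact hτ.2⟩
          simp only [this, and_self, if_true]
          have e : u - s - (τ - s) = u - τ := by ring
          rw [e]; ring
        · rw [Set.indicator_of_notMem hs]
          have : ¬(0 < s ∧ 0 < τ - s ∧ s + (τ - s) ≤ u) := by
            rintro ⟨h1, h2, _⟩
            exact hs ⟨h1, by linarith⟩
          simp only [this, if_false]
      rw [this, MeasureTheory.integral_indicator measurableSet_Ioo,
        ← MeasureTheory.integral_Ioc_eq_integral_Ioo, MeasureTheory.integral_mul_const]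
      congr 1
      unfold posConv
      rw [intervalIntegral.integral_of_le hτ0]
    calc posConv (posConv a b) c u
        = ∫ τ in Ioc (0:ℝ) u, posConv a b τ * c (u - τ) :=
          intervalIntegral.integral_of_le hu
      _ = ∫ τ in Ioc (0:ℝ) u, ∫ s : ℝ, F (T (τ, s)) :=
          setIntegral_congr_fun measurableSet_Ioc step1
      _ = ∫ τ : ℝ, ∫ s : ℝ, F (T (τ, s)) := by
          apply setIntegral_eq_integral_of_forall_compl_eq_zero
          intro τ hτ
          have : ∀ s : ℝ, F (T (τ, s)) = 0 := by
            intro s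
            rw [hT, hF]
            simp only
            have : ¬(0 < s ∧ 0 < τ - s ∧ s + (τ - s) ≤ u) := by
              rintro ⟨h1, h2, h3⟩
              rw [add_sub_cancel] at h3
              exact hτ ⟨by linarith, h3⟩
            simp only [this, if_false]
          simp only [this, MeasureTheory.integral_zero]
      _ = ∫ p : ℝ × ℝ, F (T p) ∂(volume.prod volume) := by
          rw [MeasureTheory.integral_integral (by exact hFTint)]
  rw [hLHS, hRHS, hcomp]


lemma posConv_sub {f h h₁ h₂ : ℝ → ℝ} (hfm : Measurable f) (hfi : IntegrableOn f (Ioi 0))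
    {C₁ C₂ : ℝ} (hg₁ : Good C₁ h₁) (hg₂ : Good C₂ h₂)
    (heq : ∀ v, 0 ≤ v → h v = h₁ v - h₂ v) {u : ℝ} (hu : 0 ≤ u) :
    posConv f h u = posConv f h₁ u - posConv f h₂ u := by
  have i1 := intervalIntegrable_conv_integrand hfm hfi hg₁.meas
    (fun v hv => by rw [abs_of_nonneg (hg₁.nonneg v hv)]; exact hg₁.le v hv) hu
  have i2 := intervalIntegrable_conv_integrand hfm hfi hg₂.meas
    (fun v hv => by rw [abs_of_nonneg (hg₂.nonneg v hv)]; exact hg₂.le v hv) hu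
  have e : posConv f h u = ∫ s in (0:ℝ)..u, (f s * h₁ (u - s) - f s * h₂ (u - s)) := by
    apply intervalIntegral.integral_congr
    intro s hs
    rw [uIcc_of_le hu] at hs
    show f s * h (u - s) = _
    rw [heq (u - s) (by linarith [hs.1, hs.2]), mul_sub]
  rw [e, intervalIntegral.integral_sub i1 i2]
  rfl

lemma posConv_le_exp {f h : ℝ → ℝ} (kf : Ker f) {B C : ℝ} (hC : 0 ≤ C) (hg : Good B h)
    (hhe : ∀ v, 0 ≤ v → h v ≤ C * exp v) {u : ℝ} (hu : 0 ≤ u) :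
    posConv f h u ≤ lapl f * C * exp u := by
  have i1 : IntervalIntegrable (fun s => f s * h (u - s)) volume 0 u :=
    intervalIntegrable_conv_integrand kf.meas kf.int hg.meas
      (fun v hv => by rw [abs_of_nonneg (hg.nonneg v hv)]; exact hg.le v hv) hu
  have i2 : IntervalIntegrable (fun s => f s * (C * exp (u - s))) volume 0 u := by
    rw [intervalIntegrable_iff, uIoc_of_le hu]
    refine Integrable.mono' ((kf.int.mono_set Ioc_subset_Ioi_self).abs.mul_const (C * exp u))
      (kf.meas.mul (measurable_const.mul
        (Real.measurable_exp.comp (measurable_const.sub measurable_id)))).aestronglyMeasurable ?_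
    filter_upwards [ae_restrict_mem measurableSet_Ioc] with s hs
    rw [Real.norm_eq_abs, abs_mul]
    have h1 : |C * exp (u - s)| ≤ C * exp u := by
      rw [abs_of_nonneg (mul_nonneg hC (exp_pos _).le)]
      exact mul_le_mul_of_nonneg_left (exp_le_exp.2 (by linarith [hs.1.le])) hC
    exact mul_le_mul_of_nonneg_left h1 (abs_nonneg _)
  have step1 : posConv f h u ≤ ∫ s in (0:ℝ)..u, f s * (C * exp (u - s)) := by
    apply intervalIntegral.integral_mono_on hu i1 i2
    intro s hs
    exact mul_le_mul_of_nonneg_left (hhe _ (by linarith [hs.2])) (kf.nonneg s)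
  have step2 : (∫ s in (0:ℝ)..u, f s * (C * exp (u - s)))
      = (∫ s in Ioc (0:ℝ) u, exp (-s) * f s) * (C * exp u) := by
    rw [intervalIntegral.integral_of_le hu, ← MeasureTheory.integral_mul_const]
    apply setIntegral_congr_fun measurableSet_Ioc
    intro s _
    show f s * (C * exp (u - s)) = exp (-s) * f s * (C * exp u)
    rw [show exp (u - s) = exp u * exp (-s) by rw [← exp_add]; ring_nf]
    ring
  have step3 : (∫ s in Ioc (0:ℝ) u, exp (-s) * f s) ≤ lapl f := by
    apply setIntegral_mono_set (lapl_integrand_int kf)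
    · exact ae_of_all _ (fun s => mul_nonneg (exp_pos _).le (kf.nonneg s))
    · exact HasSubset.Subset.eventuallyLE Ioc_subset_Ioi_self
  calc posConv f h u ≤ (∫ s in Ioc (0:ℝ) u, exp (-s) * f s) * (C * exp u) := by
        rw [← step2]; exact step1
    _ ≤ lapl f * (C * exp u) :=
        mul_le_mul_of_nonneg_right step3 (mul_nonneg hC (exp_pos _).le)
    _ = lapl f * C * exp u := by ring

section Towers

variable {f₁ f₂ : ℝ → ℝ}

lemma tw_good (k₁ : Ker f₁) (k₂ : Ker f₂) {h : ℝ → ℝ} {C : ℝ} (hC : 0 ≤ C) (hh : Good C h) (k : ℕ) :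
    Good C (tw f₁ f₂ h k) := by
  induction k with
  | zero => exact hh
  | succ k ih => exact posConv_good k₁ hC (posConv_good k₂ hC ih)

lemma tw_congr (k₁ : Ker f₁) (k₂ : Ker f₂) {h₁ h₂ : ℝ → ℝ} (heq : ∀ v, 0 ≤ v → h₁ v = h₂ v) (k : ℕ) :
    ∀ u, 0 ≤ u → tw f₁ f₂ h₁ k u = tw f₁ f₂ h₂ k u := by
  induction k with
  | zero => exact heq
  | succ k ih =>
    intro u hu
    exact posConv_congr (fun w hw => posConv_congr ih hw) hu

lemma tw_sub (k₁ : Ker f₁) (k₂ : Ker f₂) {h h₁ h₂ : ℝ → ℝ} {C₁ C₂ : ℝ} (hC₁ : 0 ≤ C₁) (hC₂ : 0 ≤ C₂)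
    (hg₁ : Good C₁ h₁) (hg₂ : Good C₂ h₂)
    (heq : ∀ v, 0 ≤ v → h v = h₁ v - h₂ v) (k : ℕ) :
    ∀ u, 0 ≤ u → tw f₁ f₂ h k u = tw f₁ f₂ h₁ k u - tw f₁ f₂ h₂ k u := by
  induction k with
  | zero => exact heq
  | succ k ih =>
    intro u hu
    have g₁ : Good C₁ (tw f₁ f₂ h₁ k) := tw_good k₁ k₂ hC₁ hg₁ k
    have g₂ : Good C₂ (tw f₁ f₂ h₂ k) := tw_good k₁ k₂ hC₂ hg₂ k
    have inner : ∀ w, 0 ≤ w → posConv f₂ (tw f₁ f₂ h k) w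
        = posConv f₂ (tw f₁ f₂ h₁ k) w - posConv f₂ (tw f₁ f₂ h₂ k) w :=
      fun w hw => posConv_sub k₂.meas k₂.int g₁ g₂ ih hw
    exact posConv_sub k₁.meas k₁.int (posConv_good k₂ hC₁ g₁) (posConv_good k₂ hC₂ g₂) inner hu

lemma tw_iterConv (k₁ : Ker f₁) (k₂ : Ker f₂) {h : ℝ → ℝ} {C : ℝ} (hC : 0 ≤ C) (hh : Good C h) (k : ℕ) :
    ∀ u, 0 ≤ u → iterConv (posConv f₁ f₂) h k u = tw f₁ f₂ h k u := by
  induction k with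
  | zero => intro u _; rfl
  | succ k ih =>
    intro u hu
    have g : Good C (tw f₁ f₂ h k) := tw_good k₁ k₂ hC hh k
    calc iterConv (posConv f₁ f₂) h (k+1) u
        = posConv (posConv f₁ f₂) (iterConv (posConv f₁ f₂) h k) u := rfl
      _ = posConv (posConv f₁ f₂) (tw f₁ f₂ h k) u := posConv_congr ih hu
      _ = posConv f₁ (posConv f₂ (tw f₁ f₂ h k)) u :=
          (posConv_assoc k₁.meas k₂.meas k₁.nonneg k₂.nonneg k₁.int k₂.int
            g.meas g.nonneg g.le hu).symm
      _ = tw f₁ f₂ h (k+1) u := rfl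

lemma tw_commute1 (k₁ : Ker f₁) (k₂ : Ker f₂) {h : ℝ → ℝ} (k : ℕ) :
    ∀ u, 0 ≤ u → tw f₁ f₂ (posConv f₁ h) k u = posConv f₁ (tw f₂ f₁ h k) u := by
  induction k with
  | zero => intro u _; rfl
  | succ k ih =>
    intro u hu
    calc tw f₁ f₂ (posConv f₁ h) (k+1) u
        = posConv f₁ (posConv f₂ (tw f₁ f₂ (posConv f₁ h) k)) u := rfl
      _ = posConv f₁ (posConv f₂ (posConv f₁ (tw f₂ f₁ h k))) u :=
          posConv_congr (fun w hw => posConv_congr ih hw) hu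
      _ = posConv f₁ (tw f₂ f₁ h (k+1)) u := rfl

lemma tw_commute2 (k₁ : Ker f₁) (k₂ : Ker f₂) {h : ℝ → ℝ} (k : ℕ) :
    ∀ u, 0 ≤ u → posConv f₂ (tw f₁ f₂ h k) u = tw f₂ f₁ (posConv f₂ h) k u := by
  induction k with
  | zero => intro u _; rfl
  | succ k ih =>
    intro u hu
    calc posConv f₂ (tw f₁ f₂ h (k+1)) u
        = posConv f₂ (posConv f₁ (posConv f₂ (tw f₁ f₂ h k))) u := rfl
      _ = posConv f₂ (posConv f₁ (tw f₂ f₁ (posConv f₂ h) k)) u :=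
          posConv_congr (fun w hw => posConv_congr ih hw) hu
      _ = tw f₂ f₁ (posConv f₂ h) (k+1) u := rfl

lemma tw_le_exp (k₁ : Ker f₁) (k₂ : Ker f₂) {h : ℝ → ℝ} {B C : ℝ} (hB : 0 ≤ B) (hC : 0 ≤ C) (hg : Good B h)
    (hhe : ∀ v, 0 ≤ v → h v ≤ C * exp v) (k : ℕ) :
    ∀ u, 0 ≤ u → tw f₁ f₂ h k u ≤ (lapl f₁ * lapl f₂) ^ k * C * exp u := by
  induction k with
  | zero => intro u hu; simpa [tw] using hhe u hu
  | succ k ih =>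
    intro u hu
    have g : Good B (tw f₁ f₂ h k) := tw_good k₁ k₂ hB hg k
    have hCk : 0 ≤ (lapl f₁ * lapl f₂) ^ k * C :=
      mul_nonneg (pow_nonneg (mul_nonneg (lapl_nonneg k₁) (lapl_nonneg k₂)) k) hC
    have step1 : ∀ w, 0 ≤ w → posConv f₂ (tw f₁ f₂ h k) w
        ≤ (lapl f₂ * ((lapl f₁ * lapl f₂) ^ k * C)) * exp w := by
      intro w hw
      have := posConv_le_exp k₂ hCk g (fun v hv => by
        have := ih v hv; linarith) hw
      calc posConv f₂ (tw f₁ f₂ h k) w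
          ≤ lapl f₂ * ((lapl f₁ * lapl f₂) ^ k * C) * exp w := this
        _ = (lapl f₂ * ((lapl f₁ * lapl f₂) ^ k * C)) * exp w := by ring
    have g2 : Good B (posConv f₂ (tw f₁ f₂ h k)) := posConv_good k₂ hB g
    have := posConv_le_exp k₁ (mul_nonneg (lapl_nonneg k₂) hCk) g2 step1 hu
    calc tw f₁ f₂ h (k+1) u = posConv f₁ (posConv f₂ (tw f₁ f₂ h k)) u := rfl
      _ ≤ lapl f₁ * (lapl f₂ * ((lapl f₁ * lapl f₂) ^ k * C)) * exp u := this
      _ = (lapl f₁ * lapl f₂) ^ (k+1) * C * exp u := by ring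

end Towers

end RPCS

/-- For a return process with iid first-passage times of density `g` (cdf `G`)
and iid refractory periods of density `φd` (cdf `Φd`), the counting
probabilities `q₀(t) = 1 - G(t)` and, for `k ≥ 1`,
`q_k(t) = (g*φ)^{*k} * (1-G)(t) + g * (φ*g)^{*(k-1)} * (1-Φ)(t)`
sum to one: `Σ_k q_k(t) = 1` for every `t > 0`. -/
theorem return_process_counting_sum (g φd : ℝ → ℝ) (G Φd : ℝ → ℝ)
    (hg0 : ∀ t, 0 ≤ g t) (hφ0 : ∀ t, 0 ≤ φd t)
    (hgm : Measurable g) (hφm : Measurable φd)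
    (hgd : ∫ t in Set.Ioi (0:ℝ), g t = 1)
    (hφd : ∫ t in Set.Ioi (0:ℝ), φd t = 1)
    (hG : ∀ t, G t = ∫ s in (0:ℝ)..t, g s)
    (hΦ : ∀ t, Φd t = ∫ s in (0:ℝ)..t, φd s)
    (q : ℕ → ℝ → ℝ)
    (hq0 : ∀ t, q 0 t = 1 - G t)
    (hqk : ∀ k : ℕ, ∀ t, q (k + 1) t =
      iterConv (posConv g φd) (fun u => 1 - G u) (k + 1) t +
        posConv g (iterConv (posConv φd g) (fun u => 1 - Φd u) k) t) :
    ∀ t, 0 < t → (∑' k : ℕ, q k t) = 1 := by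
  open RPCS Set Filter in
  intro t ht
  have ht0 : (0:ℝ) ≤ t := ht.le
  have hgint : IntegrableOn g (Ioi 0) := by
    by_contra hne
    rw [MeasureTheory.integral_undef hne] at hgd
    norm_num at hgd
  have hφint : IntegrableOn φd (Ioi 0) := by
    by_contra hne
    rw [MeasureTheory.integral_undef hne] at hφd
    norm_num at hφd
  have kg : Ker g := ⟨hgm, hg0, hgint, le_of_eq hgd⟩
  have kφ : Ker φd := ⟨hφm, hφ0, hφint, le_of_eq hφd⟩
  have gone : Good 1 (fun _ : ℝ => (1:ℝ)) :=
    ⟨measurable_const, fun _ _ => zero_le_one, fun _ _ => le_rfl⟩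
  have hGconv : ∀ v, G v = posConv g (fun _ => (1:ℝ)) v := by
    intro v; rw [hG]; unfold posConv; simp
  have hΦconv : ∀ v, Φd v = posConv φd (fun _ => (1:ℝ)) v := by
    intro v; rw [hΦ]; unfold posConv; simp
  have gG : Good 1 (posConv g (fun _ => (1:ℝ))) := posConv_good kg zero_le_one gone
  have gΦ : Good 1 (posConv φd (fun _ => (1:ℝ))) := posConv_good kφ zero_le_one gone
  have goneG : Good 1 (fun u => 1 - G u) := by
    refine ⟨?_, fun u hu => ?_, fun u hu => ?_⟩
    · have : (fun u => 1 - G u) = fun u => 1 - posConv g (fun _ => (1:ℝ)) u :=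
        funext fun v => by rw [hGconv v]
      rw [this]; exact measurable_const.sub gG.meas
    · rw [hGconv u]; linarith [gG.le u hu]
    · rw [hGconv u]; linarith [gG.nonneg u hu]
  have goneΦ : Good 1 (fun u => 1 - Φd u) := by
    refine ⟨?_, fun u hu => ?_, fun u hu => ?_⟩
    · have : (fun u => 1 - Φd u) = fun u => 1 - posConv φd (fun _ => (1:ℝ)) u :=
        funext fun v => by rw [hΦconv v]
      rw [this]; exact measurable_const.sub gΦ.meas
    · rw [hΦconv u]; linarith [gΦ.le u hu]
    · rw [hΦconv u]; linarith [gΦ.nonneg u hu]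
  have hqrep : ∀ k u, 0 ≤ u → q (k+1) u =
      tw g φd (fun v => 1 - G v) (k+1) u +
        posConv g (tw φd g (fun v => 1 - Φd v) k) u := by
    intro k u hu
    rw [hqk k u]
    congr 1
    · exact tw_iterConv kg kφ zero_le_one goneG (k+1) u hu
    · exact posConv_congr (tw_iterConv kφ kg zero_le_one goneΦ k) hu
  have hpart : ∀ N u, 0 ≤ u →
      (∑ k ∈ Finset.range (N+1), q k u) = 1 - posConv g (tw φd g (fun _ => (1:ℝ)) N) u := by
    intro N
    induction N with
    | zero =>
      intro u hu
      rw [Finset.sum_range_one, hq0 u, hGconv u]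
      rfl
    | succ N ih =>
      intro u hu
      rw [Finset.sum_range_succ, ih u hu, hqrep N u hu]
      have gtw1 : Good 1 (tw φd g (fun _ => (1:ℝ)) N) := tw_good kφ kg zero_le_one gone N
      have gφone : Good 1 (posConv φd (fun _ => (1:ℝ))) := gΦ
      have gtwφ1 : Good 1 (tw φd g (posConv φd (fun _ => (1:ℝ))) N) :=
        tw_good kφ kg zero_le_one gφone N
      have e1 : tw g φd (fun v => 1 - G v) (N+1) u
          = tw g φd (fun _ => (1:ℝ)) (N+1) u - tw g φd (posConv g (fun _ => (1:ℝ))) (N+1) u :=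
        tw_sub kg kφ zero_le_one zero_le_one gone gG
          (fun v _ => by rw [hGconv v]) (N+1) u hu
      have e2 : tw g φd (posConv g (fun _ => (1:ℝ))) (N+1) u
          = posConv g (tw φd g (fun _ => (1:ℝ)) (N+1)) u :=
        tw_commute1 kg kφ (N+1) u hu
      have e3 : tw g φd (fun _ => (1:ℝ)) (N+1) u
          = posConv g (tw φd g (posConv φd (fun _ => (1:ℝ))) N) u := by
        calc tw g φd (fun _ => (1:ℝ)) (N+1) u
            = posConv g (posConv φd (tw g φd (fun _ => (1:ℝ)) N)) u := rfl
          _ = posConv g (tw φd g (posConv φd (fun _ => (1:ℝ))) N) u :=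
              posConv_congr (tw_commute2 kg kφ N) hu
      have e4 : ∀ w, 0 ≤ w → tw φd g (fun v => 1 - Φd v) N w
          = tw φd g (fun _ => (1:ℝ)) N w - tw φd g (posConv φd (fun _ => (1:ℝ))) N w :=
        tw_sub kφ kg zero_le_one zero_le_one gone gΦ
          (fun v _ => by rw [hΦconv v]) N
      have e5 : posConv g (tw φd g (fun v => 1 - Φd v) N) u
          = posConv g (tw φd g (fun _ => (1:ℝ)) N) u
            - posConv g (tw φd g (posConv φd (fun _ => (1:ℝ))) N) u :=
        posConv_sub kg.meas kg.int gtw1 gtwφ1 e4 hu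
      rw [e1, e2, e5, e3]
      ring
  have hq_nonneg : ∀ k, 0 ≤ q k t := by
    intro k
    cases k with
    | zero =>
      rw [hq0]; exact goneG.nonneg t ht0
    | succ k =>
      rw [hqrep k t ht0]
      have g1 : Good 1 (tw g φd (fun v => 1 - G v) (k+1)) :=
        tw_good kg kφ zero_le_one goneG (k+1)
      have g2 : Good 1 (tw φd g (fun v => 1 - Φd v) k) :=
        tw_good kφ kg zero_le_one goneΦ k
      exact add_nonneg (g1.nonneg t ht0)
        (posConv_nonneg (fun s _ => hg0 s) g2.nonneg ht0)
  have hBnonneg : ∀ N : ℕ, 0 ≤ posConv g (tw φd g (fun _ => (1:ℝ)) N) t := fun N =>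
    posConv_nonneg (fun s _ => hg0 s) (tw_good kφ kg zero_le_one gone N).nonneg ht0
  have hαβ0 : 0 ≤ lapl φd * lapl g := mul_nonneg (lapl_nonneg kφ) (lapl_nonneg kg)
  have hBle : ∀ N : ℕ, posConv g (tw φd g (fun _ => (1:ℝ)) N) t
      ≤ lapl g * (lapl φd * lapl g) ^ N * exp t := by
    intro N
    have hCk : 0 ≤ (lapl φd * lapl g) ^ N * 1 := by positivity
    have htw := tw_le_exp kφ kg zero_le_one zero_le_one gone
      (fun v hv => by simpa using Real.one_le_exp hv) N
    have := posConv_le_exp kg hCk (tw_good kφ kg zero_le_one gone N) htw ht0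
    calc posConv g (tw φd g (fun _ => (1:ℝ)) N) t
        ≤ lapl g * ((lapl φd * lapl g) ^ N * 1) * exp t := this
      _ = lapl g * (lapl φd * lapl g) ^ N * exp t := by ring
  have hαβ : lapl φd * lapl g < 1 := by
    have h1 : lapl g < 1 := lapl_lt_one kg hgd
    have h2 : lapl φd ≤ 1 := lapl_le_one kφ
    have h3 : 0 ≤ lapl g := lapl_nonneg kg
    calc lapl φd * lapl g ≤ 1 * lapl g := mul_le_mul_of_nonneg_right h2 h3
      _ = lapl g := one_mul _
      _ < 1 := h1
  have hBtend : Tendsto (fun N : ℕ => posConv g (tw φd g (fun _ => (1:ℝ)) N) t)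
      atTop (nhds 0) := by
    apply squeeze_zero hBnonneg hBle
    have hp := tendsto_pow_atTop_nhds_zero_of_lt_one hαβ0 hαβ
    have := (hp.const_mul (lapl g)).mul_const (exp t)
    simpa using this
  have hsummable : Summable (fun k => q k t) := by
    apply summable_of_sum_range_le (c := 1) hq_nonneg
    intro n
    cases n with
    | zero => norm_num
    | succ N =>
      rw [hpart N t ht0]
      linarith [hBnonneg N]
  have h2 : Tendsto (fun n => ∑ k ∈ Finset.range n, q k t) atTop (nhds (∑' k, q k t)) :=
    hsummable.hasSum.tendsto_sum_nat
  have h1 : Tendsto (fun N => ∑ k ∈ Finset.range (N+1), q k t) atTop (nhds 1) := by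
    have he : (fun N => ∑ k ∈ Finset.range (N+1), q k t)
        = fun N => 1 - posConv g (tw φd g (fun _ => (1:ℝ)) N) t :=
      funext fun N => hpart N t ht0
    rw [he]
    simpa using (tendsto_const_nhds (x := (1:ℝ))).sub hBtend
  have h3 : Tendsto (fun N => ∑ k ∈ Finset.range (N+1), q k t)
      atTop (nhds (∑' k, q k t)) :=
    h2.comp (tendsto_add_atTop_nat 1)
  exact tendsto_nhds_unique h3 h1
end

section
/- Let λ > 0 and let T_D be a nonnegative random variable with Laplace transform L(s) = E(e^{−sT_D}), finite for all s ≥ λ, and let N be independent of T_D. In the 'reset model', where the neuron's dynamics restarts from x₀ at each arrival of an independent Poisson process of rate λ unless the diffusion has already crossed the boundary, the mean first passage time satisfies E(T) = (1 − L(λ))/(λ L(λ)), provided L(λ) > 0. -/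
open MeasureTheory ProbabilityTheory Real Set
open scoped ENNReal

/- ### Auxiliary lemmas -/

lemma myExp_Iic {lam x : ℝ} (hlam : 0 < lam) (hx : 0 ≤ x) :
    expMeasure lam (Set.Iic x) = ENNReal.ofReal (1 - Real.exp (-(lam * x))) := by
  rw [expMeasure, gammaMeasure, withDensity_apply _ measurableSet_Iic]
  have : ∫⁻ y in Set.Iic x, gammaPDF 1 lam y = ∫⁻ y in Set.Iic x, exponentialPDF lam y := rfl
  rw [this, lintegral_exponentialPDF_eq_antiDeriv hlam x, if_pos hx]

lemma myExp_Iio_zero (lam : ℝ) : expMeasure lam (Set.Iio 0) = 0 := by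
  rw [expMeasure, gammaMeasure, withDensity_apply _ measurableSet_Iio]
  have : ∫⁻ y in Set.Iio 0, gammaPDF 1 lam y = ∫⁻ y in Set.Iio 0, exponentialPDF lam y := rfl
  rw [this, lintegral_exponentialPDF_of_nonpos le_rfl]

lemma myExp_ae_nonneg {lam : ℝ} (hlam : 0 < lam) : ∀ᵐ y ∂(expMeasure lam), 0 ≤ y := by
  rw [ae_iff]
  have : {y : ℝ | ¬ 0 ≤ y} = Set.Iio 0 := by ext y; simp
  rw [this, myExp_Iio_zero]

lemma myExp_Ioi {lam x : ℝ} (hlam : 0 < lam) (hx : 0 ≤ x) :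
    expMeasure lam (Set.Ioi x) = ENNReal.ofReal (Real.exp (-(lam * x))) := by
  haveI : IsProbabilityMeasure (expMeasure lam) := isProbabilityMeasure_expMeasure hlam
  have h1 : expMeasure lam (Set.Ioi x) = 1 - expMeasure lam (Set.Iic x) := by
    rw [← Set.compl_Iic]
    rw [measure_compl measurableSet_Iic (measure_ne_top _ _), measure_univ]
  rw [h1, myExp_Iic hlam hx]
  have he1 : Real.exp (-(lam * x)) ≤ 1 := by
    rw [Real.exp_le_one_iff]; nlinarith
  rw [← ENNReal.ofReal_one, ← ENNReal.ofReal_sub _ (by nlinarith [Real.exp_pos (-(lam*x))])]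
  ring_nf

lemma myIntegral_exp_neg {lam x : ℝ} (hlam : 0 < lam) (hx : 0 ≤ x) :
    ∫ t in Set.Ioc 0 x, Real.exp (-(lam * t)) = (1 - Real.exp (-(lam * x))) / lam := by
  rw [← intervalIntegral.integral_of_le hx]
  have hd : ∀ t ∈ Set.uIcc (0:ℝ) x, HasDerivAt (fun a => -Real.exp (-(lam * a)) / lam)
      (Real.exp (-(lam * t))) t := by
    intro t _
    have h := (hasDerivAt_neg_exp_mul_exp (r := lam) (x := t)).div_const lam
    simpa [mul_comm, mul_div_assoc, mul_div_cancel_left₀ _ (ne_of_gt hlam)] using h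
  have hi : IntervalIntegrable (fun t => Real.exp (-(lam * t))) MeasureTheory.volume 0 x := by
    apply Continuous.intervalIntegrable
    have : Continuous fun t : ℝ => (-lam) * t := continuous_const.mul continuous_id
    simpa [neg_mul, Function.comp_def] using (Real.continuous_exp.comp this)
  rw [intervalIntegral.integral_eq_sub_of_hasDerivAt hd hi]
  field_simp
  simp only [mul_zero, neg_zero, Real.exp_zero]; ring

lemma myMin_exp {lam x : ℝ} (hlam : 0 < lam) (hx : 0 ≤ x) :
    ∫⁻ y, ENNReal.ofReal (min x y) ∂(expMeasure lam)
      = ENNReal.ofReal ((1 - Real.exp (-(lam * x))) / lam) := by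
  have hnn : 0 ≤ᵐ[expMeasure lam] fun y => min x y := by
    filter_upwards [myExp_ae_nonneg hlam] with y hy
    exact le_min hx hy
  rw [lintegral_eq_lintegral_meas_lt _ hnn (measurable_const.min measurable_id).aemeasurable]
  have hcong : ∫⁻ t in Set.Ioi 0, expMeasure lam {a | t < min x a}
      = ∫⁻ t in Set.Ioi 0,
          (Set.Iio x).indicator (fun t => ENNReal.ofReal (Real.exp (-(lam * t)))) t := by
    apply setLIntegral_congr_fun measurableSet_Ioi
    intro t ht
    dsimp only
    by_cases htx : t < x
    · have hset : {a : ℝ | t < min x a} = Set.Ioi t := by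
        ext a; simp [lt_min_iff, htx]
      rw [hset, myExp_Ioi hlam (le_of_lt ht)]
      exact (Set.indicator_of_mem (show t ∈ Set.Iio x from htx)
        (fun t => ENNReal.ofReal (Real.exp (-(lam * t))))).symm
    · have hset : {a : ℝ | t < min x a} = (∅ : Set ℝ) := by
        ext a; simp [lt_min_iff]; intro h; exact absurd h htx
      rw [hset]
      rw [Set.indicator_of_notMem (show t ∉ Set.Iio x from htx)]
      simp
  rw [hcong, lintegral_indicator measurableSet_Iio, Measure.restrict_restrict measurableSet_Iio]
  have : Set.Iio x ∩ Set.Ioi 0 = Set.Ioo 0 x := by ext t; simp [Set.mem_Ioo, and_comm]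
  rw [this, Measure.restrict_congr_set Ioo_ae_eq_Ioc]
  rw [← ofReal_integral_eq_lintegral_ofReal]
  · rw [myIntegral_exp_neg hlam hx]
  · exact (exp_neg_integrableOn_Ioc hlam)
  · filter_upwards with t using (Real.exp_pos _).le

lemma myIndep_mul {Ω : Type*} [MeasurableSpace Ω] {μ : Measure Ω} [IsProbabilityMeasure μ]
    {P : ℕ → Ω → ℝ × ℝ} (hindep : iIndepFun P μ)
    (hPmeas : ∀ n, Measurable (P n))
    (F : ℝ × ℝ → ℝ≥0∞) (hF : Measurable F) (i : ℕ) (S : Finset ℕ) (hiS : i ∉ S)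
    (st : ℕ → Set (ℝ × ℝ)) (hst : ∀ j, MeasurableSet (st j)) :
    ∫⁻ ω, F (P i ω) * (⋂ j ∈ S, P j ⁻¹' st j).indicator 1 ω ∂μ
      = (∫⁻ ω, F (P i ω) ∂μ) * μ (⋂ j ∈ S, P j ⁻¹' st j) := by
  set B : Set Ω := ⋂ j ∈ S, P j ⁻¹' st j with hBdef
  have hB : MeasurableSet B :=
    MeasurableSet.biInter S.countable_toSet (fun j _ => (hPmeas j) (hst j))
  set G : Ω → ℝ≥0∞ := B.indicator 1 with hGdef
  have hGmeas : Measurable G := (measurable_one.indicator hB)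
  have hind : IndepFun (fun ω => F (P i ω)) G μ := by
    have h2 := hindep.indepFun_finset {i} S (by simp [Finset.disjoint_left, hiS]) hPmeas
    have hφ : Measurable (fun v : ({ x // x ∈ ({i} : Finset ℕ) }) → ℝ × ℝ =>
        F (v ⟨i, Finset.mem_singleton_self i⟩)) := hF.comp (measurable_pi_apply _)
    set SS : Set ({ x // x ∈ S } → ℝ × ℝ) := {v | ∀ j : { x // x ∈ S }, v j ∈ st j} with hSS
    have hSset : MeasurableSet SS := by
      have : SS = ⋂ j : { x // x ∈ S }, (fun v => v j) ⁻¹' st j := by ext v; simp [SS]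
      rw [this]
      exact MeasurableSet.iInter (fun j => (measurable_pi_apply j) (hst j))
    have hψ : Measurable (SS.indicator (fun _ => (1 : ℝ≥0∞))) :=
      measurable_const.indicator hSset
    have h3 := h2.comp hφ hψ
    convert h3 using 1
    · rfl
    funext ω
    show G ω = SS.indicator (fun _ => (1 : ℝ≥0∞)) (fun j => P j ω)
    by_cases hω : ω ∈ B
    · have hω' : (fun j : { x // x ∈ S } => P j ω) ∈ SS :=
        fun j => Set.mem_iInter₂.mp hω j j.2
      rw [hGdef, Set.indicator_of_mem hω, Set.indicator_of_mem hω']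
      rfl
    · have hω' : (fun j : { x // x ∈ S } => P j ω) ∉ SS := by
        intro h; exact hω (Set.mem_iInter₂.mpr (fun j hj => h ⟨j, hj⟩))
      rw [hGdef, Set.indicator_of_notMem hω, Set.indicator_of_notMem hω']
  have hFm : Measurable (fun ω => F (P i ω)) := hF.comp (hPmeas i)
  rw [lintegral_mul_eq_lintegral_mul_lintegral_of_indepFun'' hFm.aemeasurable
    hGmeas.aemeasurable hind]
  congr 1
  exact lintegral_indicator_one hB

lemma mySum (e t : ℝ≥0∞) (p : ℝ) (hp : 0 < p) (hp1 : p ≤ 1) :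
    ∑' n : ℕ, ((n : ℝ≥0∞) * (e * (ENNReal.ofReal p * (ENNReal.ofReal (1-p))^(n-1)))
      + t * (ENNReal.ofReal (1-p))^n) = (e + t) * (ENNReal.ofReal p)⁻¹ := by
  set P : ℝ≥0∞ := ENNReal.ofReal p with hPdef
  set Q : ℝ≥0∞ := ENNReal.ofReal (1-p) with hQdef
  have hq0 : (0:ℝ) ≤ 1 - p := by linarith
  have hq1 : (1:ℝ) - p < 1 := by linarith
  have hP0 : P ≠ 0 := by simp [hPdef, ENNReal.ofReal_pos, hp]
  have hPt : P ≠ ⊤ := ENNReal.ofReal_ne_top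
  have h1Q : 1 - Q = P := by
    rw [hQdef, hPdef, ← ENNReal.ofReal_one, ← ENNReal.ofReal_sub _ hq0]
    norm_num
  have hqnorm : ‖1 - p‖ < 1 := by rw [Real.norm_eq_abs, abs_of_nonneg hq0]; exact hq1
  have hsum : Summable (fun n : ℕ => (n:ℝ) * (1-p)^n) := by
    simpa using summable_pow_mul_geometric_of_norm_lt_one 1 hqnorm
  have hgeo : Summable (fun n : ℕ => (1-p)^n) := summable_geometric_of_lt_one hq0 hq1
  have hkey : ∑' n : ℕ, (n : ℝ≥0∞) * Q^(n-1) = P⁻¹ * P⁻¹ := by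
    rw [tsum_eq_zero_add' ENNReal.summable]
    have h0 : ((0:ℕ) : ℝ≥0∞) * Q^(0-1) = 0 := by simp
    rw [h0, zero_add]
    have hterm : ∀ n : ℕ, (((n+1 : ℕ)) : ℝ≥0∞) * Q^((n+1)-1)
        = ENNReal.ofReal (((n:ℝ)+1) * (1-p)^n) := by
      intro n
      rw [ENNReal.ofReal_mul (by positivity), ENNReal.ofReal_pow hq0]
      congr 1
      · push_cast; rw [ENNReal.ofReal_add (by positivity) zero_le_one]; simp
    simp_rw [hterm]
    rw [← ENNReal.ofReal_tsum_of_nonneg (fun n => by positivity)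
      ((hsum.add hgeo).congr (fun n => by ring))]
    have hreal : ∑' n : ℕ, ((n:ℝ)+1) * (1-p)^n = (p*p)⁻¹ := by
      have h1 : ∑' n : ℕ, ((n:ℝ)+1)*(1-p)^n
          = (∑' n : ℕ, (n:ℝ)*(1-p)^n) + ∑' n : ℕ, (1-p)^n := by
        rw [← Summable.tsum_add hsum hgeo]; exact tsum_congr (fun n => by ring)
      rw [h1, tsum_coe_mul_geometric_of_norm_lt_one hqnorm, tsum_geometric_of_lt_one hq0 hq1]
      have h2 : (1:ℝ) - (1-p) = p := by ring
      rw [h2]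
      field_simp
      ring
    rw [hreal, ENNReal.ofReal_inv_of_pos (mul_pos hp hp), ENNReal.ofReal_mul hp.le,
      ENNReal.mul_inv (Or.inl hP0) (Or.inl hPt)]
  rw [ENNReal.tsum_add]
  have h2 : ∑' n : ℕ, t * Q^n = t * P⁻¹ := by
    rw [ENNReal.tsum_mul_left, ENNReal.tsum_geometric, h1Q]
  have h3 : ∑' n : ℕ, (n : ℝ≥0∞) * (e * (P * Q^(n-1))) = e * P⁻¹ := by
    have hc : ∀ n : ℕ, (n : ℝ≥0∞) * (e * (P * Q^(n-1))) = (e * P) * ((n : ℝ≥0∞) * Q^(n-1)) := by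
      intro n; ring
    simp_rw [hc]
    rw [ENNReal.tsum_mul_left, hkey, ← mul_assoc, mul_assoc e P P⁻¹,
      ENNReal.mul_inv_cancel hP0 hPt, mul_one]
  rw [h2, h3, add_mul]

lemma myPiecewise {Ω : Type*} [MeasurableSpace Ω] {K : Ω → ℕ} (hK : Measurable K)
    {F : ℕ → Ω → ℝ} (hF : ∀ n, Measurable (F n)) : Measurable (fun ω => F (K ω) ω) := by
  intro s hs
  have h : (fun ω => F (K ω) ω) ⁻¹' s = ⋃ n, (K ⁻¹' {n} ∩ F n ⁻¹' s) := by
    ext ω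
    simp only [Set.mem_preimage, Set.mem_iUnion, Set.mem_inter_iff, Set.mem_singleton_iff]
    constructor
    · intro h; exact ⟨K ω, rfl, h⟩
    · rintro ⟨n, hn, hmem⟩; rw [← hn] at hmem; exact hmem
  rw [h]
  exact MeasurableSet.iUnion fun n => (hK (measurableSet_singleton n)).inter ((hF n) hs)

/- ### Main theorem -/

/-- Mean first passage time in the 'reset model': the neuronal dynamics has iid
diffusion first-passage times `TD n` (with Laplace transform `L`) and restarts
at each event of an independent Poisson process of rate `λ` (iid exponential
inter-reset times `Ex n`) unless the diffusion has already crossed; the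
crossing time is `T = Σ_{i<K} Ex_i + TD_K` where `K` is the first cycle with
`TD_K < Ex_K`. Then `E(T) = (1 - L(λ))/(λ L(λ))`, provided `L(λ) > 0`. -/
theorem reset_model_mean_fpt
    {Ω : Type*} [MeasureSpace Ω] [IsProbabilityMeasure (ℙ : Measure Ω)]
    (lam : ℝ) (hlam : 0 < lam)
    (TD Ex : ℕ → Ω → ℝ)
    (hTDmeas : ∀ n, Measurable (TD n)) (hExmeas : ∀ n, Measurable (Ex n))
    (hTDnonneg : ∀ n ω, 0 ≤ TD n ω)
    (hTDid : ∀ n, Measure.map (TD n) ℙ = Measure.map (TD 0) ℙ)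
    (hEx : ∀ n, Measure.map (Ex n) ℙ = expMeasure lam)
    (hindep : iIndepFun
      (fun n ω => (TD n ω, Ex n ω)) ℙ)
    (hpairindep : ∀ n, IndepFun (TD n) (Ex n) ℙ)
    (L : ℝ → ℝ)
    (hL : ∀ s, lam ≤ s → L s = ∫ ω, Real.exp (-s * TD 0 ω) ∂ℙ)
    (hLpos : 0 < L lam)
    (K : Ω → ℕ) (hK : ∀ ω, K ω = sInf {n | TD n ω < Ex n ω})
    (T : Ω → ℝ)
    (hT : ∀ ω, T ω = (∑ i ∈ Finset.range (K ω), Ex i ω) + TD (K ω) ω) :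
    ∫ ω, T ω ∂ℙ = (1 - L lam) / (lam * L lam) := by
  haveI hprobe : IsProbabilityMeasure (expMeasure lam) := isProbabilityMeasure_expMeasure hlam
  set ν : Measure ℝ := Measure.map (TD 0) ℙ with hνdef
  haveI hprobν : IsProbabilityMeasure ν := Measure.isProbabilityMeasure_map (hTDmeas 0).aemeasurable
  set pm : Measure (ℝ × ℝ) := ν.prod (expMeasure lam) with hpmdef
  set P : ℕ → Ω → ℝ × ℝ := fun n ω => (TD n ω, Ex n ω) with hPdef
  have hPmeas : ∀ n, Measurable (P n) := fun n => (hTDmeas n).prodMk (hExmeas n)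
  have hPlaw : ∀ n, Measure.map (P n) ℙ = pm := by
    intro n
    have h := (indepFun_iff_map_prod_eq_prod_map_map
      (hTDmeas n).aemeasurable (hExmeas n).aemeasurable).mp (hpairindep n)
    rw [hPdef]
    rw [h, hTDid n, hEx n]
  have hν_ae : ∀ᵐ x ∂ν, 0 ≤ x := by
    rw [hνdef]
    rw [ae_map_iff (hTDmeas 0).aemeasurable measurableSet_Ici]
    filter_upwards with ω using hTDnonneg 0 ω
  have hexp_meas : Measurable (fun x : ℝ => Real.exp (-(lam * x))) := by
    have : Continuous fun x : ℝ => Real.exp (-(lam * x)) := by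
      have h1 : Continuous fun x : ℝ => (-lam) * x := continuous_const.mul continuous_id
      simpa [neg_mul, Function.comp_def] using Real.continuous_exp.comp h1
    exact this.measurable
  have hexp_int : Integrable (fun x => Real.exp (-(lam * x))) ν := by
    refine Integrable.mono' (integrable_const 1) hexp_meas.aestronglyMeasurable ?_
    filter_upwards [hν_ae] with x hx
    rw [Real.norm_eq_abs, abs_of_pos (Real.exp_pos _), Real.exp_le_one_iff]
    nlinarith
  have hexp_nn : 0 ≤ᵐ[ν] fun x => Real.exp (-(lam * x)) := by
    filter_upwards with x using (Real.exp_pos _).le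
  have hLint : ∫ x, Real.exp (-(lam * x)) ∂ν = L lam := by
    rw [hνdef, integral_map (hTDmeas 0).aemeasurable hexp_meas.aestronglyMeasurable,
      hL lam le_rfl]
    simp [neg_mul]
  set p := L lam with hpdef
  set ac : Set (ℝ × ℝ) := {z : ℝ × ℝ | z.1 < z.2} with hacdef
  have hacm : MeasurableSet ac := measurableSet_lt measurable_fst measurable_snd
  have hpmac : pm ac = ENNReal.ofReal p := by
    rw [hpmdef, Measure.prod_apply hacm]
    have h1 : ∀ x : ℝ, (Prod.mk x ⁻¹' ac) = Set.Ioi x := by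
      intro x; ext y; simp [hacdef, Set.mem_Ioi]
    calc ∫⁻ x, expMeasure lam (Prod.mk x ⁻¹' ac) ∂ν
        = ∫⁻ x, ENNReal.ofReal (Real.exp (-(lam * x))) ∂ν := by
          apply lintegral_congr_ae
          filter_upwards [hν_ae] with x hx
          rw [h1 x, myExp_Ioi hlam hx]
      _ = ENNReal.ofReal p := by
          rw [← ofReal_integral_eq_lintegral_ofReal hexp_int hexp_nn, hLint]
  have hAmeas : ∀ n, MeasurableSet (P n ⁻¹' ac) := fun n => (hPmeas n) hacm
  have hA : ∀ n, ℙ (P n ⁻¹' ac) = ENNReal.ofReal p := fun n => by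
    rw [← Measure.map_apply (hPmeas n) hacm, hPlaw n, hpmac]
  have hp1 : p ≤ 1 := ENNReal.ofReal_le_one.mp (by rw [← hA 0]; exact prob_le_one)
  have hAc : ∀ n, ℙ ((P n ⁻¹' ac)ᶜ) = ENNReal.ofReal (1 - p) := by
    intro n
    rw [measure_compl (hAmeas n) (measure_ne_top _ _), measure_univ, hA n,
      ← ENNReal.ofReal_one, ← ENNReal.ofReal_sub _ (le_of_lt hLpos)]
  set φ : ℝ × ℝ → ℝ≥0∞ := fun z => if z.1 < z.2 then 0 else ENNReal.ofReal z.2 with hφdef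
  set ψ : ℝ × ℝ → ℝ≥0∞ := fun z => if z.1 < z.2 then ENNReal.ofReal z.1 else 0 with hψdef
  have hφm : Measurable φ :=
    Measurable.ite hacm measurable_const (ENNReal.measurable_ofReal.comp measurable_snd)
  have hψm : Measurable ψ :=
    Measurable.ite hacm (ENNReal.measurable_ofReal.comp measurable_fst) measurable_const
  set ebar := ∫⁻ z, φ z ∂pm with hebar
  set tbar := ∫⁻ z, ψ z ∂pm with htbar
  have hq_int : Integrable (fun x : ℝ => (1 - Real.exp (-(lam * x))) / lam) ν :=
    ((integrable_const (1:ℝ)).sub hexp_int).div_const lam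
  have hpmmin : ∫⁻ z : ℝ × ℝ, ENNReal.ofReal (min z.1 z.2) ∂pm
      = ENNReal.ofReal ((1 - p) / lam) := by
    rw [hpmdef, lintegral_prod _ (by
      exact (ENNReal.measurable_ofReal.comp (measurable_fst.min measurable_snd)).aemeasurable)]
    calc ∫⁻ x, ∫⁻ y, ENNReal.ofReal (min x y) ∂(expMeasure lam) ∂ν
        = ∫⁻ x, ENNReal.ofReal ((1 - Real.exp (-(lam * x))) / lam) ∂ν := by
          apply lintegral_congr_ae
          filter_upwards [hν_ae] with x hx
          exact myMin_exp hlam hx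
      _ = ENNReal.ofReal ((1 - p) / lam) := by
          rw [← ofReal_integral_eq_lintegral_ofReal hq_int (by
            filter_upwards [hν_ae] with x hx
            have : Real.exp (-(lam * x)) ≤ 1 := by
              rw [Real.exp_le_one_iff]; nlinarith
            exact div_nonneg (by linarith) hlam.le)]
          congr 1
          rw [integral_div, integral_sub (integrable_const 1) hexp_int, integral_const,
            probReal_univ, smul_eq_mul, mul_one, hLint]
  have h_et : ebar + tbar = ENNReal.ofReal ((1 - p) / lam) := by
    rw [hebar, htbar, ← lintegral_add_left hφm, ← hpmmin]
    apply lintegral_congr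
    intro z
    by_cases h : z.1 < z.2
    · simp only [Pi.add_apply, hφdef, hψdef, if_pos h, zero_add, min_eq_left h.le]
    · simp only [Pi.add_apply, hφdef, hψdef, if_neg h, add_zero,
        min_eq_right (le_of_not_gt h)]
  have h_en : ∀ n, ∫⁻ ω, φ (P n ω) ∂ℙ = ebar := fun n => by
    rw [hebar, ← lintegral_map hφm (hPmeas n), hPlaw n]
  have h_tn : ∀ n, ∫⁻ ω, ψ (P n ω) ∂ℙ = tbar := fun n => by
    rw [htbar, ← lintegral_map hψm (hPmeas n), hPlaw n]
  set st : ℕ → ℕ → Set (ℝ × ℝ) := fun n j => if j = n then ac else acᶜ with hstdef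
  have hstm : ∀ n j, MeasurableSet (st n j) := by
    intro n j; by_cases h : j = n <;> simp [hstdef, h, hacm, hacm.compl]
  set C : ℕ → Set Ω := fun n => ⋂ j ∈ Finset.range (n+1), P j ⁻¹' st n j with hCdef
  have hCmeas : ∀ n, MeasurableSet (C n) := fun n =>
    MeasurableSet.biInter (Finset.range (n+1)).countable_toSet
      (fun j _ => (hPmeas j) (hstm n j))
  have hCmem : ∀ n ω, ω ∈ C n ↔ ((∀ j, j < n → ¬ TD j ω < Ex j ω) ∧ TD n ω < Ex n ω) := by
    intro n ω
    simp only [hCdef, Set.mem_iInter, Finset.mem_range]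
    constructor
    · intro h
      refine ⟨fun j hj => ?_, ?_⟩
      · have h2 := h j (by omega)
        rw [hstdef] at h2
        simp only [if_neg (Nat.ne_of_lt hj)] at h2
        simpa [hPdef, hacdef] using h2
      · have h2 := h n (by omega)
        rw [hstdef] at h2
        simp only [if_pos rfl] at h2
        simpa [hPdef, hacdef] using h2
    · rintro ⟨h1, h2⟩ j hj
      by_cases hjn : j = n
      · subst hjn
        simp only [hstdef, if_pos rfl]
        simpa [hPdef, hacdef] using h2
      · have hj' : j < n := by omega
        simp only [hstdef, if_neg hjn]
        simpa [hPdef, hacdef] using h1 j hj'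
  have hterm_e : ∀ n i, i < n →
      ∫⁻ ω, (C n).indicator (fun ω => ENNReal.ofReal (Ex i ω)) ω ∂ℙ
        = ebar * (ENNReal.ofReal p * (ENNReal.ofReal (1-p))^(n-1)) := by
    intro n i hin
    set S : Finset ℕ := (Finset.range (n+1)).erase i with hSdef
    have hiS : i ∉ S := Finset.notMem_erase i _
    set B : Set Ω := ⋂ j ∈ S, P j ⁻¹' st n j with hBdef
    have hBmem : ∀ ω, ω ∈ B ↔ ∀ j, j ≠ i → j < n + 1 → P j ω ∈ st n j := by
      intro ω
      simp only [hBdef, Set.mem_iInter, hSdef, Finset.mem_erase, Finset.mem_range]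
      constructor
      · intro h j hji hjn; exact h j ⟨hji, hjn⟩
      · rintro h j ⟨hji, hjn⟩; exact h j hji hjn
    have hCB : ∀ ω, ω ∈ C n ↔ ((¬ TD i ω < Ex i ω) ∧ ω ∈ B) := by
      intro ω
      constructor
      · intro h
        refine ⟨((hCmem n ω).mp h).1 i hin, ?_⟩
        rw [hBmem]
        intro j _ hjn
        have h2 : ω ∈ ⋂ j ∈ Finset.range (n+1), P j ⁻¹' st n j := h
        rw [Set.mem_iInter₂] at h2
        exact h2 j (by simpa [Finset.mem_range] using hjn)
      · rintro ⟨h1, h2⟩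
        rw [hCmem]
        rw [hBmem] at h2
        have hnn : P n ω ∈ st n n := h2 n (by omega) (by omega)
        rw [hstdef] at hnn
        simp only [if_pos rfl] at hnn
        refine ⟨fun j hj => ?_, by simpa [hPdef, hacdef] using hnn⟩
        by_cases hji : j = i
        · subst hji; exact h1
        · have h3 := h2 j hji (by omega)
          rw [hstdef] at h3
          simp only [if_neg (by omega : j ≠ n)] at h3
          simpa [hPdef, hacdef] using h3
    have hpt : ∀ ω, (C n).indicator (fun ω => ENNReal.ofReal (Ex i ω)) ω
        = φ (P i ω) * B.indicator 1 ω := by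
      intro ω
      by_cases hω : ω ∈ C n
      · obtain ⟨h1, h2⟩ := (hCB ω).mp hω
        rw [Set.indicator_of_mem hω, Set.indicator_of_mem h2]
        simp only [hφdef, hPdef, if_neg h1, Pi.one_apply, mul_one]
      · rw [Set.indicator_of_notMem hω]
        by_cases hB : ω ∈ B
        · have h1 : TD i ω < Ex i ω := by
            by_contra h1
            exact hω ((hCB ω).mpr ⟨h1, hB⟩)
          rw [Set.indicator_of_mem hB]
          simp only [hφdef, hPdef, if_pos h1, Pi.one_apply, zero_mul]
        · rw [Set.indicator_of_notMem hB, mul_zero]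
    rw [lintegral_congr hpt, hBdef,
      myIndep_mul hindep hPmeas φ hφm i S hiS (st n) (hstm n), h_en i]
    congr 1
    rw [hindep.measure_inter_preimage_eq_mul S (fun j _ => hstm n j)]
    have hnS : n ∈ S := by
      rw [hSdef, Finset.mem_erase, Finset.mem_range]
      exact ⟨by omega, by omega⟩
    rw [← Finset.mul_prod_erase S _ hnS]
    have hfn : ℙ (P n ⁻¹' st n n) = ENNReal.ofReal p := by
      rw [hstdef]; simp only [if_pos rfl]; exact hA n
    have hrest : ∏ j ∈ S.erase n, ℙ (P j ⁻¹' st n j) = (ENNReal.ofReal (1-p))^(n-1) := by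
      rw [Finset.prod_congr rfl (fun j hj => ?_), Finset.prod_const]
      · congr 1
        rw [Finset.card_erase_of_mem hnS, hSdef,
          Finset.card_erase_of_mem (by rw [Finset.mem_range]; omega), Finset.card_range]
        omega
      · have hjn : j ≠ n := (Finset.mem_erase.mp hj).1
        rw [hstdef]
        simp only [if_neg hjn]
        exact hAc j
    rw [hfn, hrest]
  have hterm_t : ∀ n,
      ∫⁻ ω, (C n).indicator (fun ω => ENNReal.ofReal (TD n ω)) ω ∂ℙ
        = tbar * (ENNReal.ofReal (1-p))^n := by
    intro n
    set S : Finset ℕ := Finset.range n with hSdef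
    have hiS : n ∉ S := by rw [hSdef, Finset.mem_range]; omega
    set B : Set Ω := ⋂ j ∈ S, P j ⁻¹' st n j with hBdef
    have hBmem : ∀ ω, ω ∈ B ↔ ∀ j, j < n → ¬ TD j ω < Ex j ω := by
      intro ω
      simp only [hBdef, Set.mem_iInter, hSdef, Finset.mem_range]
      constructor
      · intro h j hj
        have h2 := h j hj
        rw [hstdef] at h2
        simp only [if_neg (by omega : j ≠ n)] at h2
        simpa [hPdef, hacdef] using h2
      · intro h j hj
        rw [hstdef]
        simp only [if_neg (by omega : j ≠ n)]
        simpa [hPdef, hacdef] using h j hj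
    have hCB : ∀ ω, ω ∈ C n ↔ ((TD n ω < Ex n ω) ∧ ω ∈ B) := by
      intro ω
      rw [hCmem, hBmem]
      tauto
    have hpt : ∀ ω, (C n).indicator (fun ω => ENNReal.ofReal (TD n ω)) ω
        = ψ (P n ω) * B.indicator 1 ω := by
      intro ω
      by_cases hω : ω ∈ C n
      · obtain ⟨h1, h2⟩ := (hCB ω).mp hω
        rw [Set.indicator_of_mem hω, Set.indicator_of_mem h2]
        simp only [hψdef, hPdef, if_pos h1, Pi.one_apply, mul_one]
      · rw [Set.indicator_of_notMem hω]
        by_cases hB : ω ∈ B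
        · have h1 : ¬ TD n ω < Ex n ω := by
            intro h1
            exact hω ((hCB ω).mpr ⟨h1, hB⟩)
          rw [Set.indicator_of_mem hB]
          simp only [hψdef, hPdef, if_neg h1, Pi.one_apply, zero_mul]
        · rw [Set.indicator_of_notMem hB, mul_zero]
    rw [lintegral_congr hpt, hBdef,
      myIndep_mul hindep hPmeas ψ hψm n S hiS (st n) (hstm n), h_tn n]
    congr 1
    rw [hindep.measure_inter_preimage_eq_mul S (fun j _ => hstm n j)]
    rw [Finset.prod_congr rfl (fun j hj => ?_), Finset.prod_const]
    · rw [hSdef, Finset.card_range]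
    · have hjn : j ≠ n := by
        rw [hSdef, Finset.mem_range] at hj; omega
      rw [hstdef]
      simp only [if_neg hjn]
      exact hAc j
  have hKn : ∀ ω n, (∃ m, TD m ω < Ex m ω) → (K ω = n ↔ ω ∈ C n) := by
    intro ω n hex
    rw [hK ω]
    constructor
    · intro h
      rw [hCmem]
      have hne : {m | TD m ω < Ex m ω}.Nonempty := hex
      have hmem := Nat.sInf_mem hne
      rw [h] at hmem
      exact ⟨fun j hj => Nat.notMem_of_lt_sInf (by rw [h]; exact hj), hmem⟩
    · intro h
      obtain ⟨h1, h2⟩ := (hCmem n ω).mp h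
      refine le_antisymm (Nat.sInf_le h2) ?_
      by_contra hcon
      push_neg at hcon
      exact h1 _ hcon (Nat.sInf_mem (⟨n, h2⟩ : Set.Nonempty {m | TD m ω < Ex m ω}))
  set W : Set Ω := ⋂ m, (P m ⁻¹' ac)ᶜ with hWdef
  have hWmem : ∀ ω, ω ∈ W ↔ ∀ m, ¬ TD m ω < Ex m ω := by
    intro ω
    simp only [hWdef, Set.mem_iInter, Set.mem_compl_iff, Set.mem_preimage]
    constructor
    · intro h m; have := h m; simpa [hPdef, hacdef] using this
    · intro h m; simpa [hPdef, hacdef] using h m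
  have hWmeas : MeasurableSet W :=
    MeasurableSet.iInter fun m => (hAmeas m).compl
  have hW0 : ℙ W = 0 := by
    have hle : ∀ n : ℕ, ℙ W ≤ (ENNReal.ofReal (1-p))^n := by
      intro n
      have hsub : W ⊆ ⋂ j ∈ Finset.range n, P j ⁻¹' acᶜ := by
        intro ω hω
        rw [Set.mem_iInter₂]
        intro j _
        simpa [hPdef, hacdef] using (hWmem ω).mp hω j
      have hprod := hindep.measure_inter_preimage_eq_mul (Finset.range n)
        (sets := fun _ => acᶜ) (fun j _ => hacm.compl)
      calc ℙ W ≤ ℙ (⋂ j ∈ Finset.range n, P j ⁻¹' acᶜ) := measure_mono hsub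
        _ = ∏ j ∈ Finset.range n, ℙ (P j ⁻¹' acᶜ) := hprod
        _ = ∏ _j ∈ Finset.range n, ENNReal.ofReal (1-p) :=
            Finset.prod_congr rfl (fun j _ => hAc j)
        _ = (ENNReal.ofReal (1-p))^n := by rw [Finset.prod_const, Finset.card_range]
    have htend : Filter.Tendsto (fun n : ℕ => (ENNReal.ofReal (1-p))^n)
        Filter.atTop (nhds 0) :=
      ENNReal.tendsto_pow_atTop_nhds_zero_of_lt_one
        (by rw [← ENNReal.ofReal_one]
            exact (ENNReal.ofReal_lt_ofReal_iff_of_nonneg (by linarith)).mpr (by linarith))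
    exact le_antisymm (ge_of_tendsto' htend hle) (by simp)
  have hExnn : ∀ᵐ ω ∂ℙ, ∀ m, 0 ≤ Ex m ω := by
    rw [ae_all_iff]
    intro m
    rw [ae_iff]
    have hset : {ω | ¬ 0 ≤ Ex m ω} = Ex m ⁻¹' (Set.Iio 0) := by ext ω; simp
    rw [hset, ← Measure.map_apply (hExmeas m) measurableSet_Iio, hEx m, myExp_Iio_zero]
  have hgood : ∀ᵐ ω ∂ℙ, (∀ m, 0 ≤ Ex m ω) ∧ ∃ m, TD m ω < Ex m ω := by
    have hW' : ∀ᵐ ω ∂ℙ, ∃ m, TD m ω < Ex m ω := by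
      rw [ae_iff]
      have : {ω | ¬ ∃ m, TD m ω < Ex m ω} = W := by
        ext ω; rw [hWmem]; push_neg; rfl
      rw [this, hW0]
    filter_upwards [hExnn, hW'] with ω h1 h2 using ⟨h1, h2⟩
  have hKmeas : Measurable K := by
    apply measurable_to_countable'
    intro n
    have hset : K ⁻¹' {n} = (C n) ∪ (W ∩ (if n = 0 then Set.univ else ∅)) := by
      ext ω
      simp only [Set.mem_preimage, Set.mem_singleton_iff, Set.mem_union, Set.mem_inter_iff]
      constructor
      · intro h
        by_cases hex : ∃ m, TD m ω < Ex m ω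
        · exact Or.inl ((hKn ω n hex).mp h)
        · push_neg at hex
          have hωW : ω ∈ W := (hWmem ω).mpr (fun m => not_lt.mpr (hex m))
          have hempty : {m | TD m ω < Ex m ω} = ∅ := by
            ext m; simp only [Set.mem_setOf_eq, Set.mem_empty_iff_false, iff_false]
            exact not_lt.mpr (hex m)
          have h0 : K ω = 0 := by rw [hK ω, hempty, Nat.sInf_empty]
          right
          refine ⟨hωW, ?_⟩
          rw [if_pos (by omega : n = 0)]
          trivial
      · rintro (h | ⟨hωW, hn⟩)
        · exact (hKn ω n ⟨n, ((hCmem n ω).mp h).2⟩).mpr h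
        · by_cases hn0 : n = 0
          · subst hn0
            have hempty : {m | TD m ω < Ex m ω} = ∅ := by
              ext m; simp only [Set.mem_setOf_eq, Set.mem_empty_iff_false, iff_false]
              exact (hWmem ω).mp hωW m
            rw [hK ω, hempty, Nat.sInf_empty]
          · rw [if_neg hn0] at hn
            exact absurd hn (Set.notMem_empty ω)
    rw [hset]
    refine (hCmeas n).union (hWmeas.inter ?_)
    by_cases hn0 : n = 0
    · rw [if_pos hn0]; exact MeasurableSet.univ
    · rw [if_neg hn0]; exact MeasurableSet.empty
  have hTmeas : Measurable T := by
    have hTeq : T = fun ω => (fun n ω => (∑ i ∈ Finset.range n, Ex i ω) + TD n ω) (K ω) ω :=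
      funext hT
    rw [hTeq]
    exact myPiecewise hKmeas (fun n =>
      (Finset.measurable_sum (Finset.range n) (fun i _ => hExmeas i)).add (hTDmeas n))
  set V : ℕ → Ω → ℝ≥0∞ := fun n ω => (C n).indicator
    (fun ω => (∑ i ∈ Finset.range n, ENNReal.ofReal (Ex i ω)) + ENNReal.ofReal (TD n ω)) ω
    with hVdef
  have hVmeas : ∀ n, Measurable (V n) := by
    intro n
    apply Measurable.indicator _ (hCmeas n)
    exact (Finset.measurable_sum (Finset.range n)
      (fun i _ => ENNReal.measurable_ofReal.comp (hExmeas i))).add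
      (ENNReal.measurable_ofReal.comp (hTDmeas n))
  have haeV : ∀ n, (fun ω => if K ω = n then ENNReal.ofReal (T ω) else 0) =ᵐ[ℙ] V n := by
    intro n
    filter_upwards [hgood] with ω hω
    obtain ⟨hpos, hex⟩ := hω
    have hVval : V n ω = (C n).indicator
        (fun ω => (∑ i ∈ Finset.range n, ENNReal.ofReal (Ex i ω))
          + ENNReal.ofReal (TD n ω)) ω := rfl
    by_cases hωC : ω ∈ C n
    · have hKω : K ω = n := (hKn ω n hex).mpr hωC
      rw [if_pos hKω, hVval, Set.indicator_of_mem hωC, hT ω, hKω,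
        ENNReal.ofReal_add (Finset.sum_nonneg fun i _ => hpos i) (hTDnonneg n ω),
        ENNReal.ofReal_sum_of_nonneg (fun i _ => hpos i)]
    · rw [hVval, Set.indicator_of_notMem hωC,
        if_neg (fun h => hωC ((hKn ω n hex).mp h))]
  have hmain : ∫⁻ ω, ENNReal.ofReal (T ω) ∂ℙ = ENNReal.ofReal ((1-p)/(lam * p)) := by
    have h1 : ∀ ω, ENNReal.ofReal (T ω)
        = ∑' n, if K ω = n then ENNReal.ofReal (T ω) else 0 := by
      intro ω
      have h2 : ∀ n, (if K ω = n then ENNReal.ofReal (T ω) else 0)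
          = (if n = K ω then ENNReal.ofReal (T ω) else 0) := by
        intro n
        by_cases h : K ω = n
        · rw [if_pos h, if_pos h.symm]
        · rw [if_neg h, if_neg (fun hh => h hh.symm)]
      rw [tsum_congr h2, tsum_ite_eq]
    calc ∫⁻ ω, ENNReal.ofReal (T ω) ∂ℙ
        = ∫⁻ ω, ∑' n, (if K ω = n then ENNReal.ofReal (T ω) else 0) ∂ℙ :=
          lintegral_congr h1
      _ = ∑' n, ∫⁻ ω, (if K ω = n then ENNReal.ofReal (T ω) else 0) ∂ℙ :=
          lintegral_tsum (fun n => ((hVmeas n).aemeasurable.congr (haeV n).symm))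
      _ = ∑' n, ∫⁻ ω, V n ω ∂ℙ := tsum_congr (fun n => lintegral_congr_ae (haeV n))
      _ = ∑' n : ℕ, ((n : ℝ≥0∞) * (ebar * (ENNReal.ofReal p * (ENNReal.ofReal (1-p))^(n-1)))
            + tbar * (ENNReal.ofReal (1-p))^n) := by
          apply tsum_congr
          intro n
          have hsplit : ∀ ω, V n ω
              = (∑ i ∈ Finset.range n, (C n).indicator (fun ω => ENNReal.ofReal (Ex i ω)) ω)
                + (C n).indicator (fun ω => ENNReal.ofReal (TD n ω)) ω := by
            intro ω
            have hVval : V n ω = (C n).indicator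
                (fun ω => (∑ i ∈ Finset.range n, ENNReal.ofReal (Ex i ω))
                  + ENNReal.ofReal (TD n ω)) ω := rfl
            by_cases hω : ω ∈ C n
            · rw [hVval, Set.indicator_of_mem hω]
              rw [Set.indicator_of_mem hω]
              congr 1
              exact Finset.sum_congr rfl (fun i _ =>
                (Set.indicator_of_mem hω (fun ω => ENNReal.ofReal (Ex i ω))).symm)
            · rw [hVval, Set.indicator_of_notMem hω, Set.indicator_of_notMem hω]
              rw [Finset.sum_congr rfl (fun i _ => Set.indicator_of_notMem hω _),
                Finset.sum_const, smul_zero, zero_add]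
          rw [lintegral_congr hsplit]
          rw [lintegral_add_right _ (Measurable.indicator
            (f := fun ω => ENNReal.ofReal (TD n ω))
            (ENNReal.measurable_ofReal.comp (hTDmeas n)) (hCmeas n))]
          rw [lintegral_finset_sum _ (fun i _ => Measurable.indicator
            (f := fun ω => ENNReal.ofReal (Ex i ω))
            (ENNReal.measurable_ofReal.comp (hExmeas i)) (hCmeas n))]
          rw [Finset.sum_congr rfl (fun i hi => hterm_e n i (Finset.mem_range.mp hi)),
            Finset.sum_const, Finset.card_range, hterm_t n, nsmul_eq_mul]
      _ = (ebar + tbar) * (ENNReal.ofReal p)⁻¹ := mySum ebar tbar p hLpos hp1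
      _ = ENNReal.ofReal ((1-p)/(lam * p)) := by
          rw [h_et, ← div_eq_mul_inv, ← ENNReal.ofReal_div_of_pos hLpos, div_div]
  have hTnn : 0 ≤ᵐ[ℙ] T := by
    filter_upwards [hExnn] with ω h
    rw [hT ω]
    exact add_nonneg (Finset.sum_nonneg fun i _ => h i) (hTDnonneg _ ω)
  rw [integral_eq_lintegral_of_nonneg_ae hTnn hTmeas.aestronglyMeasurable, hmain,
    ENNReal.toReal_ofReal (div_nonneg (by linarith) (by positivity))]
end
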